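/- For real k with 0 ≤ k < 1, K(k) − E(k) = (k²/3) R_D(0, 1−k², 1), where K(k) = ∫₀^{π/2} (1−k² sin²θ)^{-1/2} dθ and E(k) = ∫₀^{π/2} (1−k² sin²θ)^{1/2} dθ. -/

import Mathlib

open MeasureTheory Real

noncomputable def RC (x y : ℝ) : ℝ :=
  (1/2) * ∫ t in Set.Ioi (0:ℝ), (Real.sqrt (t + x))⁻¹ * (t + y)⁻¹

noncomputable def RF (x y z : ℝ) : ℝ :=
  (1/2) * ∫ t in Set.Ioi (0:ℝ), (Real.sqrt ((t + x) * (t + y) * (t + z)))⁻¹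

noncomputable def RD (x y z : ℝ) : ℝ :=
  (3/2) * ∫ t in Set.Ioi (0:ℝ),
    (Real.sqrt ((t + x) * (t + y)))⁻¹ * ((t + z) * Real.sqrt (t + z))⁻¹

noncomputable def RJ (x y z p : ℝ) : ℝ :=
  (3/2) * ∫ t in Set.Ioi (0:ℝ),
    (Real.sqrt ((t + x) * (t + y) * (t + z)))⁻¹ * (t + p)⁻¹

noncomputable def RG (x y z : ℝ) : ℝ :=
  (1/4) * ∫ t in Set.Ioi (0:ℝ),
    (Real.sqrt ((t + x) * (t + y) * (t + z)))⁻¹ *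
      (x / (t + x) + y / (t + y) + z / (t + z)) * t

/-!
Since `Δ(θ)⁻¹ - Δ(θ) = k² sin²θ / Δ(θ)` for `Δ(θ) = √(1 - k² sin²θ)`, the left side is
`k² ∫₀^{π/2} sin²θ / Δ(θ) dθ`. The substitution `t = cot²θ` gives `t + 1 = 1 / sin²θ`,
`t + 1 - k² = Δ(θ)² / sin²θ` and `dt = -2 cos θ / sin³θ dθ`, which turns the integral defining
`R_D(0, 1 - k², 1)` into `3 ∫₀^{π/2} sin²θ / Δ(θ) dθ`.
-/

open Set

theorem one_sub_mul_sin_sq_pos {m : ℝ} (hm : m < 1) (θ : ℝ) : 0 < 1 - m * sin θ ^ 2 := by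
  rcases le_total m 0 with h | h
  · nlinarith [sq_nonneg (sin θ)]
  · nlinarith [sin_sq_le_one θ]

theorem integral_inv_sqrt_sub_integral_sqrt {m : ℝ} (hm : m < 1) (a b : ℝ) :
    (∫ θ in a..b, (√(1 - m * sin θ ^ 2))⁻¹) - ∫ θ in a..b, √(1 - m * sin θ ^ 2) =
      m * ∫ θ in a..b, sin θ ^ 2 * (√(1 - m * sin θ ^ 2))⁻¹ := by
  have hcont : Continuous fun θ => √(1 - m * sin θ ^ 2) := by fun_prop
  have hne (θ : ℝ) : √(1 - m * sin θ ^ 2) ≠ 0 :=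
    (sqrt_pos.2 (one_sub_mul_sin_sq_pos hm θ)).ne'
  have hinv : IntervalIntegrable (fun θ => (√(1 - m * sin θ ^ 2))⁻¹) volume a b :=
    (hcont.inv₀ hne).intervalIntegrable _ _
  rw [← intervalIntegral.integral_const_mul,
    ← intervalIntegral.integral_sub hinv (hcont.intervalIntegrable _ _)]
  refine intervalIntegral.integral_congr fun θ _ => ?_
  have hsq := sq_sqrt (one_sub_mul_sin_sq_pos hm θ).le
  field_simp [hne θ]
  linarith

theorem sin_pos_and_cos_pos_of_mem_Ioo {θ : ℝ} (hθ : θ ∈ Ioo 0 (π / 2)) :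
    0 < sin θ ∧ 0 < cos θ :=
  ⟨sin_pos_of_pos_of_lt_pi hθ.1 (by linarith [hθ.2, pi_pos]),
    cos_pos_of_mem_Ioo ⟨by linarith [hθ.1, pi_pos], hθ.2⟩⟩

theorem hasDerivAt_cot_sq {θ : ℝ} (hθ : sin θ ≠ 0) :
    HasDerivAt (fun x => cot x ^ 2) (-2 * cos θ / sin θ ^ 3) θ := by
  have h : HasDerivAt (fun x => (cos x / sin x) ^ 2)
      (2 * (cos θ / sin θ) * ((-sin θ * sin θ - cos θ * cos θ) / sin θ ^ 2)) θ := by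
    simpa using ((hasDerivAt_cos θ).fun_div (hasDerivAt_sin θ) hθ).fun_pow 2
  simp only [cot_eq_cos_div_sin]
  convert h using 1
  field_simp
  linear_combination cos θ * sin_sq_add_cos_sq θ

theorem strictAntiOn_cot_sq : StrictAntiOn (fun x => cot x ^ 2) (Ioo 0 (π / 2)) := by
  intro a ha b hb hab
  obtain ⟨hsa, hca⟩ := sin_pos_and_cos_pos_of_mem_Ioo ha
  obtain ⟨hsb, hcb⟩ := sin_pos_and_cos_pos_of_mem_Ioo hb
  have hcos : cos b < cos a := strictAntiOn_cos
    ⟨ha.1.le, by linarith [ha.2, pi_pos]⟩ ⟨hb.1.le, by linarith [hb.2, pi_pos]⟩ hab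
  have hsin : sin a < sin b := strictMonoOn_sin
    ⟨by linarith [ha.1, pi_pos], ha.2.le⟩ ⟨by linarith [hb.1, pi_pos], hb.2.le⟩ hab
  have hcot : cos b / sin b < cos a / sin a := by
    rw [div_lt_div_iff₀ hsb hsa]
    nlinarith [mul_lt_mul_of_pos_left hsin hca]
  simp only [cot_eq_cos_div_sin]
  exact pow_lt_pow_left₀ hcot (by positivity) two_ne_zero

theorem image_cot_sq_Ioo : (fun x => cot x ^ 2) '' Ioo 0 (π / 2) = Ioi 0 := by
  refine Subset.antisymm ?_ fun y (hy : 0 < y) => ?_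
  · rintro _ ⟨θ, hθ, rfl⟩
    obtain ⟨hs, hc⟩ := sin_pos_and_cos_pos_of_mem_Ioo hθ
    simp only [mem_Ioi, cot_eq_cos_div_sin]
    positivity
  · have hsqrt : 0 < √y := sqrt_pos.2 hy
    refine ⟨arctan (√y)⁻¹, ⟨?_, arctan_lt_pi_div_two _⟩, ?_⟩
    · rw [← arctan_zero]
      exact arctan_strictMono (inv_pos.2 hsqrt)
    · show cot _ ^ 2 = y
      rw [cot_eq_cos_div_sin, ← inv_div, ← tan_eq_sin_div_cos, tan_arctan, inv_inv]
      exact sq_sqrt hy.le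

theorem integral_Ioi_eq_integral_comp_cot_sq {E : Type*} [NormedAddCommGroup E]
    [NormedSpace ℝ E] (g : ℝ → E) :
    ∫ t in Ioi 0, g t = ∫ θ in Ioo 0 (π / 2), (2 * cos θ / sin θ ^ 3) • g (cot θ ^ 2) := by
  rw [← image_cot_sq_Ioo, integral_image_eq_integral_abs_deriv_smul measurableSet_Ioo
    (fun θ hθ => (hasDerivAt_cot_sq (sin_pos_and_cos_pos_of_mem_Ioo hθ).1.ne').hasDerivWithinAt)
    strictAntiOn_cot_sq.injOn]
  refine setIntegral_congr_fun measurableSet_Ioo fun θ hθ => ?_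
  obtain ⟨hs, hc⟩ := sin_pos_and_cos_pos_of_mem_Ioo hθ
  rw [neg_mul, neg_div, abs_neg, abs_of_pos (by positivity)]

theorem jacobian_mul_RD_integrand_cot_sq {m θ : ℝ} (hm : m < 1) (hθ : θ ∈ Ioo 0 (π / 2)) :
    (2 * cos θ / sin θ ^ 3) * ((√((cot θ ^ 2 + 0) * (cot θ ^ 2 + (1 - m))))⁻¹ *
      ((cot θ ^ 2 + 1) * √(cot θ ^ 2 + 1))⁻¹) =
      2 * (sin θ ^ 2 * (√(1 - m * sin θ ^ 2))⁻¹) := by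
  obtain ⟨hs, hc⟩ := sin_pos_and_cos_pos_of_mem_Ioo hθ
  have hΔ := sq_sqrt (one_sub_mul_sin_sq_pos hm θ).le
  have hplus_one : cot θ ^ 2 + 1 = (sin θ)⁻¹ ^ 2 := by
    rw [cot_eq_cos_div_sin]
    field_simp
    linear_combination cos_sq_add_sin_sq θ
  have hprod : (cot θ ^ 2 + 0) * (cot θ ^ 2 + (1 - m)) =
      (cos θ * √(1 - m * sin θ ^ 2) / sin θ ^ 2) ^ 2 := by
    rw [div_pow, mul_pow, hΔ, cot_eq_cos_div_sin]
    field_simp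
    linear_combination cos θ ^ 2 * cos_sq_add_sin_sq θ
  rw [hplus_one, hprod, sqrt_sq (by positivity), sqrt_sq (by positivity)]
  field_simp

theorem RD_zero_one_sub_one_eq_integral {m : ℝ} (hm : m < 1) :
    RD 0 (1 - m) 1 = 3 * ∫ θ in (0)..(π / 2), sin θ ^ 2 * (√(1 - m * sin θ ^ 2))⁻¹ := by
  rw [RD, integral_Ioi_eq_integral_comp_cot_sq, setIntegral_congr_fun measurableSet_Ioo
    fun θ hθ => (smul_eq_mul ..).trans (jacobian_mul_RD_integrand_cot_sq hm hθ),
    intervalIntegral.integral_of_le (by positivity), ← integral_Ioc_eq_integral_Ioo,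
    integral_const_mul]
  ring

theorem stmt18 (k : ℝ) (hk0 : 0 ≤ k) (hk1 : k < 1) :
    (∫ θ in (0:ℝ)..(Real.pi / 2), (Real.sqrt (1 - k ^ 2 * Real.sin θ ^ 2))⁻¹)
      - ∫ θ in (0:ℝ)..(Real.pi / 2), Real.sqrt (1 - k ^ 2 * Real.sin θ ^ 2) =
      (k ^ 2 / 3) * RD 0 (1 - k ^ 2) 1 := by
  have hk : k ^ 2 < 1 := by nlinarith
  rw [integral_inv_sqrt_sub_integral_sqrt hk, RD_zero_one_sub_one_eq_integral hk]
  ring
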